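/- (Minimum of two solutions of a perturbed ODE with continuous drift is a solution.) Let b : ℝ → ℝ be continuous, let B : [0,1] → ℝ be continuous with B_0 = 0, let x ∈ ℝ, and let X¹, X² : [0,1] → ℝ be continuous functions satisfying X^i_t = x + ∫_0^t b(X^i_r) dr + B_t for all t ∈ [0,1] and i = 1, 2. Then the function Y_t := min(X¹_t, X²_t) satisfies Y_t = x + ∫_0^t b(Y_r) dr + B_t for all t ∈ [0,1]. -/

import Mathlib

/-!
The noise cancels in the difference: `X₁ - X₂ = ∫ (b ∘ X₁ - b ∘ X₂)` is continuously
differentiable, and its derivative vanishes wherever `X₁ = X₂`. Hence the positive part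
`X₁ - min X₁ X₂ = max (X₁ - X₂) 0` is differentiable everywhere on `[0, 1]`, with derivative
`b ∘ X₁ - b ∘ min X₁ X₂` (squeeze at the zeros). Integrating this from `0`, where `X₁ = X₂`,
gives the equation for `min X₁ X₂`.
-/

open MeasureTheory intervalIntegral Set

section Calculus

variable {E : Type*} [NormedAddCommGroup E] [NormedSpace ℝ E] [CompleteSpace E]
  {f F : ℝ → E} {a b t : ℝ}

theorem ContinuousOn.hasDerivWithinAt_integral_Icc (hf : ContinuousOn f (Icc a b))
    (ht : t ∈ Icc a b) : HasDerivWithinAt (fun u => ∫ r in a..u, f r) (f t) (Icc a b) t := by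
  have : Fact (t ∈ Icc a b) := ⟨ht⟩
  exact integral_hasDerivWithinAt_right
    ((hf.mono (Icc_subset_Icc le_rfl ht.2)).intervalIntegrable_of_Icc ht.1)
    (hf.stronglyMeasurableAtFilter_nhdsWithin measurableSet_Icc t) (hf t ht)

theorem eq_add_integral_of_hasDerivWithinAt_Icc
    (hF : ∀ s ∈ Icc a b, HasDerivWithinAt F (f s) (Icc a b) s) (hf : ContinuousOn f (Icc a b))
    (ht : t ∈ Icc a b) : F t = F a + ∫ r in a..t, f r := by
  have hsub : Icc a t ⊆ Icc a b := Icc_subset_Icc le_rfl ht.2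
  rw [integral_eq_sub_of_hasDeriv_right_of_le ht.1
    (fun s hs => (hF s (hsub hs)).continuousWithinAt.mono hsub)
    (fun s hs => ((hF s (hsub (Ioo_subset_Icc_self hs))).hasDerivAt
      (Icc_mem_nhds hs.1 (hs.2.trans_le ht.2))).hasDerivWithinAt)
    ((hf.mono hsub).intervalIntegrable_of_Icc ht.1)]
  abel

end Calculus

theorem HasDerivWithinAt.max_zero {f : ℝ → ℝ} {f' : ℝ} {s : Set ℝ} {t : ℝ}
    (hf : HasDerivWithinAt f f' s t) (hf' : f t = 0 → f' = 0) :
    HasDerivWithinAt (fun u => max (f u) 0) (if 0 < f t then f' else 0) s t := by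
  rcases lt_trichotomy (f t) 0 with hneg | hzero | hpos
  · rw [if_neg hneg.not_gt]
    refine (hasDerivWithinAt_const t s 0).congr_of_eventuallyEq ?_ (max_eq_right hneg.le)
    filter_upwards [hf.continuousWithinAt.eventually (gt_mem_nhds hneg)] with u hu
    exact max_eq_right hu.le
  · rw [if_neg hzero.not_gt]
    have hf0 := hf
    rw [hf' hzero, hasDerivWithinAt_iff_isLittleO] at hf0
    rw [hasDerivWithinAt_iff_isLittleO]
    refine (Asymptotics.isBigO_of_le _ fun u => ?_).trans_isLittleO hf0
    -- `max · 0` is 1-Lipschitz and vanishes at `f t = 0`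
    simp only [hzero, max_self, sub_zero, smul_zero, Real.norm_eq_abs]
    rw [abs_of_nonneg (le_max_right _ _)]
    exact max_le (le_abs_self _) (abs_nonneg _)
  · rw [if_pos hpos]
    refine hf.congr_of_eventuallyEq ?_ (max_eq_left hpos.le)
    filter_upwards [hf.continuousWithinAt.eventually (lt_mem_nhds hpos)] with u hu
    exact max_eq_left hu.le

theorem HasDerivWithinAt.sub_min {f g φ : ℝ → ℝ} {s : Set ℝ} {t : ℝ}
    (h : HasDerivWithinAt (fun u => f u - g u) (φ (f t) - φ (g t)) s t) :
    HasDerivWithinAt (fun u => f u - min (f u) (g u)) (φ (f t) - φ (min (f t) (g t))) s t := by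
  have hmax := h.max_zero fun h0 => by rw [sub_eq_zero.1 h0, sub_self]
  have hφ : (if 0 < f t - g t then φ (f t) - φ (g t) else 0) = φ (f t) - φ (min (f t) (g t)) := by
    split_ifs with hlt
    · rw [min_eq_right (sub_pos.1 hlt).le]
    · rw [min_eq_left (sub_nonpos.1 (not_lt.1 hlt)), sub_self]
  rw [hφ] at hmax
  convert hmax using 2 with u
  rw [← max_sub_sub_left, sub_self, max_comm]

theorem min_of_two_solutions_is_solution
    (b : ℝ → ℝ) (hb : Continuous b)
    (B : ℝ → ℝ)
    (x : ℝ) (X₁ X₂ : ℝ → ℝ)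
    (hX₁cont : ContinuousOn X₁ (Set.Icc (0:ℝ) 1))
    (hX₂cont : ContinuousOn X₂ (Set.Icc (0:ℝ) 1))
    (hX₁ : ∀ t ∈ Set.Icc (0:ℝ) 1, X₁ t = x + (∫ r in (0:ℝ)..t, b (X₁ r)) + B t)
    (hX₂ : ∀ t ∈ Set.Icc (0:ℝ) 1, X₂ t = x + (∫ r in (0:ℝ)..t, b (X₂ r)) + B t) :
    ∀ t ∈ Set.Icc (0:ℝ) 1,
      min (X₁ t) (X₂ t) = x + (∫ r in (0:ℝ)..t, b (min (X₁ r) (X₂ r))) + B t := by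
  have hbX₁ : ContinuousOn (fun r => b (X₁ r)) (Icc 0 1) := hb.comp_continuousOn hX₁cont
  have hbX₂ : ContinuousOn (fun r => b (X₂ r)) (Icc 0 1) := hb.comp_continuousOn hX₂cont
  have hbY : ContinuousOn (fun r => b (min (X₁ r) (X₂ r))) (Icc 0 1) :=
    hb.comp_continuousOn (hX₁cont.inf hX₂cont)
  have hgap : ∀ s ∈ Icc (0:ℝ) 1, HasDerivWithinAt (fun u => X₁ u - min (X₁ u) (X₂ u))
      (b (X₁ s) - b (min (X₁ s) (X₂ s))) (Icc 0 1) s := fun s hs =>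
    HasDerivWithinAt.sub_min (φ := b) <|
      ((hbX₁.hasDerivWithinAt_integral_Icc hs).fun_sub
        (hbX₂.hasDerivWithinAt_integral_Icc hs)).congr
        (fun u hu => by rw [hX₁ u hu, hX₂ u hu]; ring) (by rw [hX₁ s hs, hX₂ s hs]; ring)
  intro t ht
  have h0 : X₁ 0 = X₂ 0 := by
    rw [hX₁ 0 (left_mem_Icc.2 zero_le_one), hX₂ 0 (left_mem_Icc.2 zero_le_one)]
    simp
  have hint : ∀ {f : ℝ → ℝ}, ContinuousOn f (Icc 0 1) → IntervalIntegrable f volume 0 t :=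
    fun hf => (hf.mono (Icc_subset_Icc le_rfl ht.2)).intervalIntegrable_of_Icc ht.1
  have hftc := eq_add_integral_of_hasDerivWithinAt_Icc hgap (hbX₁.sub hbY) ht
  rw [h0, min_self, sub_self, zero_add, integral_sub (hint hbX₁) (hint hbY)] at hftc
  linarith [hX₁ t ht]
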